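/- arXiv:2601.22446 — 5 statements merged into one kernel-verified Lean document; each statement's English description precedes it below -/
import Mathlib

section
/- (Supermartingale Property) Fix u ∈ [0,1] and suppose the null hypothesis H_{0,u}: R(u) > ε holds, where R(u) = (1 − ρ_deploy)·E[l_1·1{U_1 < u}]. Then for any sequence of nonnegative F_{t-1}-measurable random variables λ_t(u) satisfying 1 + λ_t(u)·D_t(u) ≥ 0 almost surely, the wealth process defined by K_0(u) = 1 and K_t(u) = K_{t-1}(u)·(1 + λ_t(u)·D_t(u)) is a nonnegative supermartingale with respect to the filtration (F_t)_{t≥0}. -/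
/-!
Conditionally on the past and on the current context `(l_t, U_t)`, the selection indicator `ξ_t`
has mean `π_t`, so inverse-propensity weighting makes `Z_t` conditionally unbiased for
`(1 - ρ_min) l_t 1{U_t < u}`. Since `(l_t, U_t)` is independent of `F_{t-1}` and distributed like
`(l_1, U_1)`, the tower property gives `E[Z_t | F_{t-1}] = R(u) > ε`, i.e. the payoff `D_t` has
nonpositive conditional drift. A nonnegative predictable bet then makes `1 + λ_t D_t` a
nonnegative factor with conditional mean at most `1`, and a product of such factors is a
nonnegative supermartingale. The bound `π_t ≥ ρ_min > 0` and bounded bets keep every factor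
bounded, which gives integrability.
-/

open MeasureTheory ProbabilityTheory

section

variable {Ω : Type*} {m0 : MeasurableSpace Ω} {μ : Measure Ω}

theorem condExp_one_add_mul_le_one [IsFiniteMeasure μ] {m : MeasurableSpace Ω} (hm : m ≤ m0)
    {lam D : Ω → ℝ} (hlam : StronglyMeasurable[m] lam) (hlam0 : ∀ ω, 0 ≤ lam ω)
    (hD : Integrable D μ) (hlamD : Integrable (lam * D) μ) (hdrift : μ[D | m] ≤ᵐ[μ] 0) :
    μ[1 + lam * D | m] ≤ᵐ[μ] 1 := by
  have hadd := condExp_add (integrable_const (1 : ℝ)) hlamD m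
  rw [condExp_const hm] at hadd
  filter_upwards [hadd, condExp_mul_of_stronglyMeasurable_left hlam hlamD hD, hdrift]
    with ω h_add h_pull h_drift
  rw [Pi.one_def, h_add, Pi.add_apply, h_pull, Pi.mul_apply]
  have := mul_nonpos_of_nonneg_of_nonpos (hlam0 ω) h_drift
  linarith

theorem supermartingale_of_mul_condExp_le_one [IsFiniteMeasure μ] {ℱ : Filtration ℕ m0}
    {K M : ℕ → Ω → ℝ} (hK0 : K 0 = 1) (hK : ∀ i, K (i + 1) = K i * M i)
    (hM : ∀ i, StronglyMeasurable[ℱ (i + 1)] (M i)) (hM_bdd : ∀ i, ∃ C, ∀ ω, |M i ω| ≤ C)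
    (hM_nonneg : ∀ i, ∀ᵐ ω ∂μ, 0 ≤ M i ω) (hM_le : ∀ i, μ[M i | ℱ i] ≤ᵐ[μ] 1) :
    Supermartingale K ℱ μ ∧ ∀ i, ∀ᵐ ω ∂μ, 0 ≤ K i ω := by
  have hadapted : StronglyAdapted ℱ K := by
    intro i
    induction i with
    | zero => rw [hK0]; exact stronglyMeasurable_const
    | succ i ih => rw [hK]; exact (ih.mono (ℱ.mono i.le_succ)).mul (hM i)
  have hM_int (i : ℕ) : Integrable (M i) μ := by
    obtain ⟨C, hC⟩ := hM_bdd i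
    exact .of_bound ((hM i).mono (ℱ.le _)).aestronglyMeasurable C (.of_forall hC)
  have hint (i : ℕ) : Integrable (K i) μ := by
    induction i with
    | zero => rw [hK0]; exact integrable_const 1
    | succ i ih =>
      obtain ⟨C, hC⟩ := hM_bdd i
      rw [hK]
      exact ih.mul_bdd (hM_int i).aestronglyMeasurable (.of_forall hC)
  have hnonneg (i : ℕ) : ∀ᵐ ω ∂μ, 0 ≤ K i ω := by
    induction i with
    | zero => simp [hK0]
    | succ i ih =>
      filter_upwards [ih, hM_nonneg i] with ω hKω hMω
      rw [hK, Pi.mul_apply]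
      exact mul_nonneg hKω hMω
  refine ⟨supermartingale_nat hadapted hint fun i => ?_, hnonneg⟩
  filter_upwards [condExp_mul_of_stronglyMeasurable_left (hadapted i) (hK i ▸ hint (i + 1))
    (hM_int i), hM_le i, hnonneg i] with ω h_pull h_le h_nonneg
  rw [hK, h_pull, Pi.mul_apply]
  exact mul_le_of_le_one_right h_nonneg h_le

theorem condExp_const_sub_nonpos [IsFiniteMeasure μ] {m : MeasurableSpace Ω} (hm : m ≤ m0)
    {Z : Ω → ℝ} {ε R : ℝ} (hZ : Integrable Z μ) (hZR : μ[Z | m] =ᵐ[μ] fun _ => R) (hεR : ε ≤ R) :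
    μ[(fun _ => ε) - Z | m] ≤ᵐ[μ] 0 := by
  filter_upwards [condExp_sub (integrable_const ε) hZ m, hZR] with ω h_sub h_R
  rw [h_sub, Pi.sub_apply, condExp_const hm, h_R]
  exact sub_nonpos.mpr hεR

theorem supermartingale_wealth [IsFiniteMeasure μ] {ℱ : Filtration ℕ m0} {K lam D : ℕ → Ω → ℝ}
    (hK0 : K 0 = 1) (hK : ∀ i, K (i + 1) = K i * (1 + lam (i + 1) * D (i + 1)))
    (hD : ∀ i, Measurable[ℱ (i + 1)] (D (i + 1))) (hD_bdd : ∀ i, ∃ C, ∀ ω, |D (i + 1) ω| ≤ C)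
    (hD_drift : ∀ i, μ[D (i + 1) | ℱ i] ≤ᵐ[μ] 0) (hlam : ∀ i, Measurable[ℱ i] (lam (i + 1)))
    (hlam0 : ∀ i ω, 0 ≤ lam i ω) (hlam_bdd : ∀ i, ∃ C, ∀ ω, lam i ω ≤ C)
    (hconstr : ∀ i, ∀ᵐ ω ∂μ, 0 ≤ 1 + lam (i + 1) ω * D (i + 1) ω) :
    Supermartingale K ℱ μ ∧ ∀ i, ∀ᵐ ω ∂μ, 0 ≤ K i ω := by
  have hlamD_bdd (i : ℕ) : ∃ C, ∀ ω, |lam (i + 1) ω * D (i + 1) ω| ≤ C := by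
    obtain ⟨Cl, hCl⟩ := hlam_bdd (i + 1)
    obtain ⟨CD, hCD⟩ := hD_bdd i
    refine ⟨Cl * CD, fun ω => ?_⟩
    rw [abs_mul, abs_of_nonneg (hlam0 _ ω)]
    exact mul_le_mul (hCl ω) (hCD ω) (abs_nonneg _) ((hlam0 _ ω).trans (hCl ω))
  have hlamD_meas (i : ℕ) : Measurable[ℱ (i + 1)] (lam (i + 1) * D (i + 1)) :=
    ((hlam i).mono (ℱ.mono i.le_succ) le_rfl).mul (hD i)
  refine supermartingale_of_mul_condExp_le_one hK0 hK
    (fun i => (measurable_const.add (hlamD_meas i)).stronglyMeasurable)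
    (fun i => let ⟨C, hC⟩ := hlamD_bdd i
      ⟨1 + C, fun ω => (abs_add_le _ _).trans (by simpa using hC ω)⟩)
    hconstr fun i => condExp_one_add_mul_le_one (ℱ.le i) (hlam i).stronglyMeasurable
      (hlam0 _) ?_ ?_ (hD_drift i)
  · obtain ⟨C, hC⟩ := hD_bdd i
    exact .of_bound ((hD i).mono (ℱ.le _) le_rfl).aestronglyMeasurable C (.of_forall hC)
  · obtain ⟨C, hC⟩ := hlamD_bdd i
    exact .of_bound ((hlamD_meas i).mono (ℱ.le _) le_rfl).aestronglyMeasurable C (.of_forall hC)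

theorem condExp_mul_div_of_condExp_eq {m : MeasurableSpace Ω} {Y p ξ : Ω → ℝ}
    (hY : Measurable[m] Y) (hp : Measurable[m] p) (hp0 : ∀ ω, p ω ≠ 0)
    (hξ : Integrable ξ μ) (hYξp : Integrable (fun ω => Y ω * ξ ω / p ω) μ)
    (hcond : μ[ξ | m] =ᵐ[μ] p) :
    μ[fun ω => Y ω * ξ ω / p ω | m] =ᵐ[μ] Y := by
  have hrw : (fun ω => Y ω * ξ ω / p ω) = Y / p * ξ := by
    ext ω; simp only [Pi.mul_apply, Pi.div_apply]; ring
  rw [hrw] at hYξp ⊢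
  filter_upwards [condExp_mul_of_stronglyMeasurable_left (hY.div hp).stronglyMeasurable hYξp hξ,
    hcond] with ω h_pull h_cond
  rw [h_pull, Pi.mul_apply, h_cond, Pi.div_apply, div_mul_cancel₀ _ (hp0 ω)]

theorem condExp_mul_div_eq_integral [IsProbabilityMeasure μ] {m₁ m₂ m : MeasurableSpace Ω}
    (hm₁ : m₁ ≤ m) (hm₂ : m₂ ≤ m) (hm : m ≤ m0) {Y p ξ : Ω → ℝ}
    (hY : Measurable[m₁] Y) (hp : Measurable[m] p) (hp0 : ∀ ω, p ω ≠ 0)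
    (hξ : Integrable ξ μ) (hYξp : Integrable (fun ω => Y ω * ξ ω / p ω) μ)
    (hcond : μ[ξ | m] =ᵐ[μ] p) (hindep : Indep m₁ m₂ μ) :
    μ[fun ω => Y ω * ξ ω / p ω | m₂] =ᵐ[μ] fun _ => ∫ ω, Y ω ∂μ :=
  calc μ[fun ω => Y ω * ξ ω / p ω | m₂]
      =ᵐ[μ] μ[μ[fun ω => Y ω * ξ ω / p ω | m] | m₂] := (condExp_condExp_of_le hm₂ hm).symm
    _ =ᵐ[μ] μ[Y | m₂] :=
      condExp_congr_ae (condExp_mul_div_of_condExp_eq (hY.mono hm₁ le_rfl) hp hp0 hξ hYξp hcond)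
    _ =ᵐ[μ] fun _ => ∫ ω, Y ω ∂μ :=
      condExp_indep_eq (hm₁.trans hm) (hm₂.trans hm) hY.stronglyMeasurable hindep

noncomputable def ipwLoss (c u : ℝ) (l U ξ p : Ω → ℝ) (ω : Ω) : ℝ :=
  c * l ω * ξ ω * {ω' | U ω' < u}.indicator (fun _ => 1) ω / p ω

theorem abs_ipwLoss_le {c u δ : ℝ} {l U ξ p : Ω → ℝ} {ω : Ω} (hl : |l ω| ≤ 1) (hξ : |ξ ω| ≤ 1)
    (hδ : 0 < δ) (hδp : δ ≤ p ω) : |ipwLoss c u l U ξ p ω| ≤ |c| / δ := by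
  rw [ipwLoss, abs_div, abs_of_pos (hδ.trans_le hδp), abs_mul, abs_mul, abs_mul]
  refine div_le_div₀ (abs_nonneg c) ?_ hδ hδp
  calc |c| * |l ω| * |ξ ω| * |{ω' | U ω' < u}.indicator (fun _ => (1 : ℝ)) ω|
      ≤ |c| * 1 * 1 * 1 := by
        gcongr
        simpa using norm_indicator_le_norm_self (s := {ω' | U ω' < u}) (fun _ => (1 : ℝ)) ω
    _ = |c| := by ring

theorem Measurable.ipwLoss {m : MeasurableSpace Ω} {l U ξ p : Ω → ℝ} (c u : ℝ)
    (hl : Measurable[m] l) (hU : Measurable[m] U) (hξ : Measurable[m] ξ) (hp : Measurable[m] p) :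
    Measurable[m] (ipwLoss c u l U ξ p) :=
  (((measurable_const.mul hl).mul hξ).mul
    (measurable_const.indicator (measurableSet_lt hU measurable_const))).div hp

theorem condExp_ipwLoss_eq_integral [IsProbabilityMeasure μ] {m : MeasurableSpace Ω} (hm : m ≤ m0)
    {l U ξ p : Ω → ℝ} {c u δ : ℝ} (hl : Measurable[m0] l) (hU : Measurable[m0] U)
    (hl1 : ∀ ω, |l ω| ≤ 1) (hξ : Measurable[m0] ξ) (hξ1 : ∀ ω, |ξ ω| ≤ 1)
    (hp : Measurable[m ⊔ .comap l inferInstance ⊔ .comap U inferInstance] p) (hδ : 0 < δ)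
    (hδp : ∀ ω, δ ≤ p ω)
    (hcond : μ[ξ | m ⊔ .comap l inferInstance ⊔ .comap U inferInstance] =ᵐ[μ] p)
    (hindep : Indep (.comap (fun ω => (l ω, U ω)) inferInstance) m μ) :
    μ[ipwLoss c u l U ξ p | m] =ᵐ[μ]
      fun _ => c * ∫ ω, l ω * {ω' | U ω' < u}.indicator (fun _ => 1) ω ∂μ := by
  have hl' : Measurable[m ⊔ .comap l inferInstance ⊔ .comap U inferInstance] l :=
    .of_comap_le (le_sup_right.trans le_sup_left)
  have hU' : Measurable[m ⊔ .comap l inferInstance ⊔ .comap U inferInstance] U :=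
    .of_comap_le le_sup_right
  have hm' : m ⊔ .comap l inferInstance ⊔ .comap U inferInstance ≤ m0 :=
    sup_le (sup_le hm hl.comap_le) hU.comap_le
  set ind : Ω → ℝ := {ω' | U ω' < u}.indicator fun _ => 1
  have hY : Measurable[.comap (fun ω => (l ω, U ω)) inferInstance] fun ω => c * l ω * ind ω :=
    ((measurable_const.mul measurable_fst).mul (measurable_const.indicator
      (measurableSet_lt measurable_snd measurable_const))).comp (comap_measurable _)
  have hloss : ipwLoss c u l U ξ p = fun ω => c * l ω * ind ω * ξ ω / p ω := by
    ext ω; rw [ipwLoss, mul_right_comm _ (ξ ω)]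
  have hloss_int : Integrable (ipwLoss c u l U ξ p) μ :=
    .of_bound ((Measurable.ipwLoss c u hl hU hξ (hp.mono hm' le_rfl)).aestronglyMeasurable)
      (|c| / δ) (.of_forall fun ω => abs_ipwLoss_le (hl1 ω) (hξ1 ω) hδ (hδp ω))
  have hξ_int : Integrable ξ μ := .of_bound hξ.aestronglyMeasurable 1 (.of_forall hξ1)
  rw [hloss] at hloss_int
  rw [hloss, ← integral_const_mul]
  simp_rw [← mul_assoc]
  exact condExp_mul_div_eq_integral (hl'.prodMk hU').comap_le (le_sup_left.trans le_sup_left) hm'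
    hY hp (fun ω => (hδ.trans_le (hδp ω)).ne') hξ_int hloss_int hcond hindep

theorem ProbabilityTheory.IdentDistrib.integral_mul_indicator_lt_eq {Ω' : Type*}
    [MeasurableSpace Ω'] {ν : Measure Ω'} {l U : Ω → ℝ} {l' U' : Ω' → ℝ}
    (h : IdentDistrib (fun ω => (l ω, U ω)) (fun ω => (l' ω, U' ω)) μ ν) (u : ℝ) :
    ∫ ω, l ω * {ω' | U ω' < u}.indicator (fun _ => 1) ω ∂μ =
      ∫ ω, l' ω * {ω' | U' ω' < u}.indicator (fun _ => 1) ω ∂ν :=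
  (h.comp (measurable_fst.mul (measurable_const.indicator
    (measurableSet_lt measurable_snd measurable_const)))).integral_eq

noncomputable def propensity (uhat U : Ω → ℝ) (r : ℝ) (ω : Ω) : ℝ :=
  {ω' | uhat ω' ≤ U ω'}.indicator (fun _ => 1) ω
    + r * {ω' | U ω' < uhat ω'}.indicator (fun _ => 1) ω

theorem le_propensity {uhat U : Ω → ℝ} {r δ : ℝ} (hδr : δ ≤ r) (hδ1 : δ ≤ 1) (ω : Ω) :
    δ ≤ propensity uhat U r ω := by
  simp only [propensity, Set.indicator_apply, Set.mem_ofPred_eq]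
  split_ifs <;> linarith

theorem Measurable.propensity {m : MeasurableSpace Ω} {uhat U : Ω → ℝ} (huhat : Measurable[m] uhat)
    (hU : Measurable[m] U) (r : ℝ) : Measurable[m] (propensity uhat U r) :=
  (measurable_const.indicator (measurableSet_le huhat hU)).add
    (measurable_const.mul (measurable_const.indicator (measurableSet_lt hU huhat)))

end

theorem stmt_3_general {Ω : Type*} {m0 : MeasurableSpace Ω} {μ : Measure Ω} [IsProbabilityMeasure μ]
    (ℱ : MeasureTheory.Filtration ℕ m0)
    (l U uhat ξ π : ℕ → Ω → ℝ)
    (ρwarm ρdeploy : ℝ) (Twarm : ℕ)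
    (hρd : 0 < ρdeploy) (hρdw : ρdeploy ≤ ρwarm) (hρw : ρwarm < 1)
    (ρ : ℕ → ℝ) (hρ : ∀ s, ρ s = if s ≤ Twarm then ρwarm else ρdeploy)
    (ρmin : ℝ) (hρmin : ρmin = ρdeploy)
    (ε : ℝ)
    (hl_meas : ∀ s, 1 ≤ s → Measurable[ℱ s] (l s))
    (hU_meas : ∀ s, 1 ≤ s → Measurable[ℱ s] (U s))
    (hl_mem : ∀ s ω, 1 ≤ s → l s ω ∈ Set.Icc (0 : ℝ) 1)
    (huhat_meas : ∀ s, Measurable[ℱ s] (uhat s))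
    (hξ_meas : ∀ s, 1 ≤ s → Measurable[ℱ s] (ξ s))
    (hξ01 : ∀ s ω, ξ s ω = 0 ∨ ξ s ω = 1)
    (hπ : ∀ s ω, 1 ≤ s → π s ω =
      Set.indicator {ω' | uhat (s - 1) ω' ≤ U s ω'} (fun _ => (1 : ℝ)) ω
        + ρ s * Set.indicator {ω' | U s ω' < uhat (s - 1) ω'} (fun _ => (1 : ℝ)) ω)
    (hξcond : ∀ s, 1 ≤ s →
      μ[ξ s | (ℱ (s - 1) : MeasurableSpace Ω)
          ⊔ MeasurableSpace.comap (l s) Real.measurableSpace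
          ⊔ MeasurableSpace.comap (U s) Real.measurableSpace] =ᵐ[μ] π s)
    (hident : ∀ s t : ℕ, 1 ≤ s → 1 ≤ t →
      IdentDistrib (fun ω => (l s ω, U s ω)) (fun ω => (l t ω, U t ω)) μ μ)
    (hindep_past : ∀ s, 1 ≤ s →
      Indep (MeasurableSpace.comap (fun ω => (l s ω, U s ω))
        (inferInstance : MeasurableSpace (ℝ × ℝ))) (ℱ (s - 1)) μ)
    -- fix u and suppose the null hypothesis H_{0,u} : R(u) > ε holds
    (u : ℝ)
    (R : ℝ) (hRdef : R = (1 - ρdeploy) *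
      ∫ ω, l 1 ω * Set.indicator {ω' | U 1 ω' < u} (fun _ => (1 : ℝ)) ω ∂μ)
    (hnull : ε < R)
    (Z D : ℕ → Ω → ℝ)
    (hZ : ∀ s ω, 1 ≤ s → Z s ω = (1 - ρmin) * l s ω * ξ s ω *
      Set.indicator {ω' | U s ω' < u} (fun _ => (1 : ℝ)) ω / π s ω)
    (hD : ∀ s ω, D s ω = ε - Z s ω)
    -- nonnegative, bounded, predictable bets with 1 + λ_t D_t ≥ 0 a.s.
    (lam : ℕ → Ω → ℝ)
    (hlam_meas : ∀ s, 1 ≤ s → Measurable[ℱ (s - 1)] (lam s))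
    (hlam_nonneg : ∀ s ω, 0 ≤ lam s ω)
    (hlam_bdd : ∀ s, ∃ C : ℝ, ∀ ω, lam s ω ≤ C)
    (hconstr : ∀ s, 1 ≤ s → ∀ᵐ ω ∂μ, 0 ≤ 1 + lam s ω * D s ω)
    (K : ℕ → Ω → ℝ)
    (hK0 : ∀ ω, K 0 ω = 1)
    (hK : ∀ s, 1 ≤ s → ∀ ω, K s ω = K (s - 1) ω * (1 + lam s ω * D s ω)) :
    Supermartingale K ℱ μ ∧ ∀ s : ℕ, ∀ᵐ ω ∂μ, 0 ≤ K s ω := by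
  have hπ_eq (i : ℕ) : π (i + 1) = propensity (uhat i) (U (i + 1)) (ρ (i + 1)) :=
    funext fun ω => hπ (i + 1) ω i.succ_pos
  have hπ_ge (i : ℕ) (ω : Ω) : ρdeploy ≤ π (i + 1) ω := by
    rw [hπ_eq]
    exact le_propensity (by rw [hρ]; split_ifs <;> linarith) (by linarith) ω
  have hl1 (i : ℕ) (ω : Ω) : |l (i + 1) ω| ≤ 1 := by
    obtain ⟨h0, h1⟩ := hl_mem (i + 1) ω i.succ_pos
    exact abs_le.mpr ⟨by linarith, h1⟩
  have hξ1 (i : ℕ) (ω : Ω) : |ξ (i + 1) ω| ≤ 1 := by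
    rcases hξ01 (i + 1) ω with h | h <;> simp [h]
  have hZ_eq (i : ℕ) :
      Z (i + 1) = ipwLoss (1 - ρmin) u (l (i + 1)) (U (i + 1)) (ξ (i + 1)) (π (i + 1)) :=
    funext fun ω => hZ _ ω i.succ_pos
  have hZ_bdd (i : ℕ) (ω : Ω) : |Z (i + 1) ω| ≤ |1 - ρmin| / ρdeploy :=
    hZ_eq i ▸ abs_ipwLoss_le (hl1 i ω) (hξ1 i ω) hρd (hπ_ge i ω)
  have hZ_meas (i : ℕ) : Measurable[ℱ (i + 1)] (Z (i + 1)) := by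
    have hU := hU_meas (i + 1) i.succ_pos
    rw [hZ_eq, hπ_eq]
    exact .ipwLoss _ _ (hl_meas _ i.succ_pos) hU (hξ_meas _ i.succ_pos)
      (((huhat_meas i).mono (ℱ.mono i.le_succ) le_rfl).propensity hU _)
  have hZR (i : ℕ) : μ[Z (i + 1) | ℱ i] =ᵐ[μ] fun _ => R := by
    have hπ_meas : Measurable[ℱ i ⊔ .comap (l (i + 1)) inferInstance
        ⊔ .comap (U (i + 1)) inferInstance] (π (i + 1)) := by
      rw [hπ_eq]
      refine .propensity ?_ (.of_comap_le le_sup_right) _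
      exact (huhat_meas i).mono (le_sup_left.trans le_sup_left) le_rfl
    rw [hZ_eq, hRdef, ← hρmin,
      ← (hident (i + 1) 1 i.succ_pos le_rfl).integral_mul_indicator_lt_eq u]
    exact condExp_ipwLoss_eq_integral (ℱ.le i) ((hl_meas _ i.succ_pos).mono (ℱ.le _) le_rfl)
      ((hU_meas _ i.succ_pos).mono (ℱ.le _) le_rfl) (hl1 i)
      ((hξ_meas _ i.succ_pos).mono (ℱ.le _) le_rfl) (hξ1 i) hπ_meas hρd (hπ_ge i)
      (hξcond (i + 1) i.succ_pos) (hindep_past (i + 1) i.succ_pos)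
  have hD_eq (i : ℕ) : D (i + 1) = (fun _ => ε) - Z (i + 1) := funext (hD _)
  have hZ_int (i : ℕ) : Integrable (Z (i + 1)) μ :=
    .of_bound ((hZ_meas i).mono (ℱ.le _) le_rfl).aestronglyMeasurable _ (.of_forall (hZ_bdd i))
  refine supermartingale_wealth (funext hK0) (fun i => funext (hK (i + 1) i.succ_pos))
    (fun i => hD_eq i ▸ measurable_const.sub (hZ_meas i))
    (fun i => ⟨|ε| + |1 - ρmin| / ρdeploy, fun ω => ?_⟩)
    (fun i => hD_eq i ▸ condExp_const_sub_nonpos (ℱ.le i) (hZ_int i) (hZR i) hnull.le)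
    (fun i => hlam_meas (i + 1) i.succ_pos) hlam_nonneg hlam_bdd
    (fun i => hconstr (i + 1) i.succ_pos)
  rw [hD]
  exact (abs_sub _ _).trans (add_le_add le_rfl (hZ_bdd i ω))

/-- Supermartingale property: under the null hypothesis `R(u) > ε`, the wealth process
`K_0(u) = 1`, `K_t(u) = K_{t-1}(u)·(1 + λ_t(u)·D_t(u))` is a nonnegative supermartingale
with respect to the filtration `(F_t)`. -/
theorem stmt_3 {Ω : Type*} {m0 : MeasurableSpace Ω} {μ : Measure Ω} [IsProbabilityMeasure μ]
    (ℱ : MeasureTheory.Filtration ℕ m0)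
    (l U uhat ξ π : ℕ → Ω → ℝ)
    (ρwarm ρdeploy : ℝ) (Twarm : ℕ)
    (hρd : 0 < ρdeploy) (hρdw : ρdeploy ≤ ρwarm) (hρw : ρwarm < 1)
    (ρ : ℕ → ℝ) (hρ : ∀ s, ρ s = if s ≤ Twarm then ρwarm else ρdeploy)
    (ρmin : ℝ) (hρmin : ρmin = ρdeploy)
    (ε : ℝ) (hε : ε ∈ Set.Ioo (0 : ℝ) 1)
    (hl_meas : ∀ s, 1 ≤ s → Measurable[ℱ s] (l s))
    (hU_meas : ∀ s, 1 ≤ s → Measurable[ℱ s] (U s))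
    (hl_mem : ∀ s ω, 1 ≤ s → l s ω ∈ Set.Icc (0 : ℝ) 1)
    (hU_mem : ∀ s ω, 1 ≤ s → U s ω ∈ Set.Icc (0 : ℝ) 1)
    (huhat_meas : ∀ s, Measurable[ℱ s] (uhat s))
    (huhat_mem : ∀ s ω, uhat s ω ∈ Set.Icc (0 : ℝ) 1)
    (hξ_meas : ∀ s, 1 ≤ s → Measurable[ℱ s] (ξ s))
    (hξ01 : ∀ s ω, ξ s ω = 0 ∨ ξ s ω = 1)
    (hπ : ∀ s ω, 1 ≤ s → π s ω =
      Set.indicator {ω' | uhat (s - 1) ω' ≤ U s ω'} (fun _ => (1 : ℝ)) ω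
        + ρ s * Set.indicator {ω' | U s ω' < uhat (s - 1) ω'} (fun _ => (1 : ℝ)) ω)
    (hξcond : ∀ s, 1 ≤ s →
      μ[ξ s | (ℱ (s - 1) : MeasurableSpace Ω)
          ⊔ MeasurableSpace.comap (l s) Real.measurableSpace
          ⊔ MeasurableSpace.comap (U s) Real.measurableSpace] =ᵐ[μ] π s)
    (hident : ∀ s t : ℕ, 1 ≤ s → 1 ≤ t →
      IdentDistrib (fun ω => (l s ω, U s ω)) (fun ω => (l t ω, U t ω)) μ μ)
    (hindep : iIndepFun
      (fun s ω => (l (s + 1) ω, U (s + 1) ω)) μ)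
    (hindep_past : ∀ s, 1 ≤ s →
      Indep (MeasurableSpace.comap (fun ω => (l s ω, U s ω))
        (inferInstance : MeasurableSpace (ℝ × ℝ))) (ℱ (s - 1)) μ)
    -- fix u and suppose the null hypothesis H_{0,u} : R(u) > ε holds
    (u : ℝ) (hu : u ∈ Set.Icc (0 : ℝ) 1)
    (R : ℝ) (hRdef : R = (1 - ρdeploy) *
      ∫ ω, l 1 ω * Set.indicator {ω' | U 1 ω' < u} (fun _ => (1 : ℝ)) ω ∂μ)
    (hnull : ε < R)
    (Z D : ℕ → Ω → ℝ)
    (hZ : ∀ s ω, 1 ≤ s → Z s ω = (1 - ρmin) * l s ω * ξ s ω *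
      Set.indicator {ω' | U s ω' < u} (fun _ => (1 : ℝ)) ω / π s ω)
    (hD : ∀ s ω, D s ω = ε - Z s ω)
    -- nonnegative, bounded, predictable bets with 1 + λ_t D_t ≥ 0 a.s.
    (lam : ℕ → Ω → ℝ)
    (hlam_meas : ∀ s, 1 ≤ s → Measurable[ℱ (s - 1)] (lam s))
    (hlam_nonneg : ∀ s ω, 0 ≤ lam s ω)
    (hlam_bdd : ∀ s, ∃ C : ℝ, ∀ ω, lam s ω ≤ C)
    (hconstr : ∀ s, 1 ≤ s → ∀ᵐ ω ∂μ, 0 ≤ 1 + lam s ω * D s ω)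
    (K : ℕ → Ω → ℝ)
    (hK0 : ∀ ω, K 0 ω = 1)
    (hK : ∀ s, 1 ≤ s → ∀ ω, K s ω = K (s - 1) ω * (1 + lam s ω * D s ω)) :
    Supermartingale K ℱ μ ∧ ∀ s : ℕ, ∀ᵐ ω ∂μ, 0 ≤ K s ω :=
  stmt_3_general ℱ l U uhat ξ π ρwarm ρdeploy Twarm hρd hρdw hρw ρ hρ ρmin hρmin ε hl_meas hU_meas
    hl_mem huhat_meas hξ_meas hξ01 hπ hξcond hident hindep_past u R hRdef hnull Z D hZ hD lam
    hlam_meas hlam_nonneg hlam_bdd hconstr K hK0 hK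
end

section
/- (Safety of IPS+Hoeff) Suppose the pairs (l_t, U_t), t ≥ 1, are i.i.d., (l_t, U_t) is independent of F_{t-1} for every t, and ρ_t ≡ ρ ∈ (0,1) is fixed. Let M̃ = (1 − ρ)/ρ, α_t = 6α/(π²·t²), let U be a finite subset of [0,1] of cardinality N, and define û_t = max{ u ∈ U : (1/t)·Σ_{i=1}^t Z_i(u) + M̃·√( log(N/α_t)/(2t) ) ≤ ε }, with û_t = 0 if this set is empty. Assume that for each fixed u ∈ U the random variables Z_1(u), Z_2(u), … take values in [0, M̃] and satisfy E[Z_i(u) | F_{i-1}] = R(u) almost surely, where R(u) = (1 − ρ)·E[l_1·1{U_1 < u}]. Then P( there exists t ≥ 1 with R(û_t) > ε ) ≤ α. -/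
open MeasureTheory ProbabilityTheory
open scoped Classical

/-!
For a fixed grid point `u`, the increments `Z_i(u) - R(u)` are bounded martingale differences,
so by the conditional Hoeffding lemma and a Chernoff bound (Azuma–Hoeffding) the upper confidence
bound `(1/t) ∑ Z_i(u) + M̃ √(log (N/α_t) / (2t))` drops below `ε` while `R(u) > ε` with
probability at most `α_t / N`. Whenever `R(û_t) > ε`, the selected `û_t` is such a grid point
(the fallback `û_t = 0` is safe because `R(0) = 0`), so a union bound over the `N` grid points
and over `t`, with `∑_t α_t = α`, gives the claim.
-/

section Hoeffding

open Real

-- Hoeffding's lemma for the two-point law of a centred Bernoulli(p) variable.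
lemma one_sub_mul_exp_add_mul_exp_le (p h : ℝ) (hp0 : 0 ≤ p) (hp1 : p ≤ 1) :
    (1 - p) * exp (-p * h) + p * exp ((1 - p) * h) ≤ exp (h ^ 2 / 8) := by
  let ν : Measure ℝ :=
    ENNReal.ofReal (1 - p) • Measure.dirac (-p) + ENNReal.ofReal p • Measure.dirac (1 - p)
  have hν : ∀ f : ℝ → ℝ, ∫ x, f x ∂ν = (1 - p) * f (-p) + p * f (1 - p) := by
    intro f
    rw [integral_add_measure, integral_smul_measure, integral_smul_measure, integral_dirac,
      integral_dirac, ENNReal.toReal_ofReal (by linarith), ENNReal.toReal_ofReal hp0,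
      smul_eq_mul, smul_eq_mul]
    · exact (integrable_dirac (by simp)).smul_measure (by simp)
    · exact (integrable_dirac (by simp)).smul_measure (by simp)
  have : IsProbabilityMeasure ν := ⟨by
    simp [ν, ← ENNReal.ofReal_add (by linarith : (0:ℝ) ≤ 1 - p) hp0]⟩
  have hν_supp : ∀ᵐ x ∂ν, x ∈ Set.Icc (-p) (1 - p) :=
    ae_add_measure_iff.2
      ⟨Measure.ae_smul_measure ((ae_dirac_iff measurableSet_Icc).2 ⟨le_rfl, by linarith⟩) _,
        Measure.ae_smul_measure ((ae_dirac_iff measurableSet_Icc).2 ⟨by linarith, le_rfl⟩) _⟩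
  have hHoeffding := (hasSubgaussianMGF_of_mem_Icc_of_integral_eq_zero aemeasurable_id hν_supp
    (by rw [hν]; simp only [id]; ring)).mgf_le h
  rw [mgf, hν] at hHoeffding
  calc (1 - p) * exp (-p * h) + p * exp ((1 - p) * h)
      = (1 - p) * exp (h * id (-p)) + p * exp (h * id (1 - p)) := by simp only [id]; ring_nf
    _ ≤ _ := hHoeffding
    _ = exp (h ^ 2 / 8) := by rw [sub_neg_eq_add, sub_add_cancel, nnnorm_one]; push_cast; ring_nf

lemma mem_Icc_of_condExp_ae_eq_const {Ω : Type*} {m m0 : MeasurableSpace Ω} {μ : Measure Ω}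
    [IsProbabilityMeasure μ] (hm : m ≤ m0) {a b r : ℝ} {Y : Ω → ℝ} (hY : AEMeasurable Y μ)
    (hrange : ∀ᵐ ω ∂μ, Y ω ∈ Set.Icc a b) (hcond : μ[Y | m] =ᵐ[μ] fun _ => r) :
    r ∈ Set.Icc a b := by
  have hYint : Integrable Y μ := .of_mem_Icc a b hY hrange
  have hr : ∫ ω, Y ω ∂μ = r := by
    rw [← integral_condExp hm, integral_congr_ae hcond, integral_const, probReal_univ, one_smul]
  rw [← hr]
  constructor
  · simpa using integral_mono_ae (integrable_const a) hYint (hrange.mono fun _ h => h.1)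
  · simpa using integral_mono_ae hYint (integrable_const b) (hrange.mono fun _ h => h.2)

lemma exp_mul_sub_le_chord {M r c y : ℝ} (hM : 0 < M) (hy : y ∈ Set.Icc 0 M) :
    exp (c * (y - r))
      ≤ exp (c * (0 - r)) + (exp (c * (M - r)) - exp (c * (0 - r))) / M * y := by
  have harg : (M - y) / M * (c * (0 - r)) + y / M * (c * (M - r)) = c * (y - r) := by
    field_simp; ring
  have hconv := convexOn_exp.2 (Set.mem_univ (c * (0 - r))) (Set.mem_univ (c * (M - r)))
    (div_nonneg (sub_nonneg.2 hy.2) hM.le) (div_nonneg hy.1 hM.le) (by field_simp; ring)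
  simp only [smul_eq_mul, harg] at hconv
  refine hconv.trans_eq ?_
  field_simp; ring

lemma condExp_exp_mul_sub_le {Ω : Type*} {m m0 : MeasurableSpace Ω} {μ : Measure Ω}
    [IsProbabilityMeasure μ] (hm : m ≤ m0) {M r c : ℝ} (hM : 0 < M) {Y : Ω → ℝ}
    (hY : AEMeasurable Y μ) (hrange : ∀ᵐ ω ∂μ, Y ω ∈ Set.Icc 0 M)
    (hcond : μ[Y | m] =ᵐ[μ] fun _ => r) :
    μ[fun ω => exp (c * (Y ω - r)) | m] ≤ᵐ[μ] fun _ => exp (c ^ 2 * M ^ 2 / 8) := by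
  have hr := mem_Icc_of_condExp_ae_eq_const hm hY hrange hcond
  have hYint : Integrable Y μ := .of_mem_Icc 0 M hY hrange
  set A := exp (c * (0 - r))
  set B := exp (c * (M - r))
  -- convexity puts `exp` below its chord; the chord is affine in `Y`, so its conditional
  -- expectation is explicit
  have hchord : ∀ y ∈ Set.Icc 0 M, exp (c * (y - r)) ≤ A + (B - A) / M * y :=
    fun y hy => exp_mul_sub_le_chord hM hy
  have hchord_int : Integrable (fun ω => A + (B - A) / M * Y ω) μ :=
    (integrable_const A).add (hYint.const_mul _)
  have hexp_int : Integrable (fun ω => exp (c * (Y ω - r))) μ :=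
    hchord_int.mono' ((hY.sub_const r).const_mul c).exp.aestronglyMeasurable
      (hrange.mono fun ω hω => by rw [norm_of_nonneg (exp_pos _).le]; exact hchord _ hω)
  have hchord_condExp : μ[fun ω => A + (B - A) / M * Y ω | m] =ᵐ[μ]
      fun _ => A + (B - A) / M * r := by
    rw [show (fun ω => A + (B - A) / M * Y ω) = (fun _ => A) + ((B - A) / M) • Y from rfl]
    filter_upwards [condExp_add (integrable_const A) (hYint.smul ((B - A) / M)) m,
      condExp_smul (μ := μ) ((B - A) / M) Y m, hcond] with ω h_add h_smul h_Y
    rw [h_add, Pi.add_apply, condExp_const hm, h_smul, Pi.smul_apply, h_Y, smul_eq_mul]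
  have hbound : A + (B - A) / M * r ≤ exp (c ^ 2 * M ^ 2 / 8) := by
    have := one_sub_mul_exp_add_mul_exp_le (r / M) (c * M) (div_nonneg hr.1 hM.le)
      ((div_le_one hM).2 hr.2)
    convert this using 1
    · simp only [A, B]; field_simp; ring_nf
    · ring_nf
  filter_upwards [condExp_mono hexp_int hchord_int (hrange.mono fun ω hω => hchord _ hω),
    hchord_condExp] with ω h_mono h_eq
  exact h_mono.trans (h_eq.le.trans hbound)

lemma aestronglyMeasurable_finsetSum {Ω ι β : Type*} {m m0 : MeasurableSpace Ω}
    {μ : Measure[m0] Ω} [AddCommMonoid β] [TopologicalSpace β] [ContinuousAdd β]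
    (s : Finset ι) {f : ι → Ω → β} (hf : ∀ i ∈ s, AEStronglyMeasurable[m] (f i) μ) :
    AEStronglyMeasurable[m] (fun ω => ∑ i ∈ s, f i ω) μ := by
  induction s using Finset.induction_on with
  | empty => simpa using aestronglyMeasurable_const
  | insert i s hi ih =>
    simp_rw [Finset.sum_insert hi]
    exact (hf i (s.mem_insert_self i)).add (ih fun j hj => hf j (Finset.mem_insert_of_mem hj))

lemma integral_mul_le_of_condExp_le {Ω : Type*} {m m0 : MeasurableSpace Ω} {μ : Measure Ω}
    [IsFiniteMeasure μ] (hm : m ≤ m0) {f g : Ω → ℝ} {K : ℝ} (hf : AEStronglyMeasurable[m] f μ)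
    (hf_nonneg : ∀ᵐ ω ∂μ, 0 ≤ f ω) (hf_int : Integrable f μ) (hg_int : Integrable g μ)
    (hfg_int : Integrable (fun ω => f ω * g ω) μ) (hgK : μ[g | m] ≤ᵐ[μ] fun _ => K) :
    ∫ ω, f ω * g ω ∂μ ≤ (∫ ω, f ω ∂μ) * K := by
  have hpull : μ[f * g | m] =ᵐ[μ] f * μ[g | m] :=
    condExp_mul_of_aestronglyMeasurable_left hf hfg_int hg_int
  calc ∫ ω, f ω * g ω ∂μ
      = ∫ ω, (μ[f * g | m]) ω ∂μ := (integral_condExp hm).symm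
    _ = ∫ ω, f ω * (μ[g | m]) ω ∂μ := integral_congr_ae hpull
    _ ≤ ∫ ω, f ω * K ∂μ := by
        refine integral_mono_ae (integrable_condExp.congr hpull) (hf_int.mul_const K) ?_
        filter_upwards [hgK, hf_nonneg] with ω hgK hf_nonneg
        exact mul_le_mul_of_nonneg_left hgK hf_nonneg
    _ = (∫ ω, f ω ∂μ) * K := integral_mul_const _ _

section Azuma

variable {Ω : Type*} {m0 : MeasurableSpace Ω} {μ : Measure Ω} [IsProbabilityMeasure μ]
  {ℱ : Filtration ℕ m0} {M r : ℝ} {Y : ℕ → Ω → ℝ}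

lemma integral_exp_mul_sum_sub_le (hM : 0 < M)
    (hY_meas : ∀ s, 1 ≤ s → AEStronglyMeasurable[ℱ s] (Y s) μ)
    (hrange : ∀ s, 1 ≤ s → ∀ ω, Y s ω ∈ Set.Icc 0 M)
    (hcond : ∀ s, 1 ≤ s → μ[Y s | ℱ (s - 1)] =ᵐ[μ] fun _ => r) (c : ℝ) (t : ℕ) :
    ∫ ω, exp (c * ∑ i ∈ Finset.Icc 1 t, (Y i ω - r)) ∂μ ≤ exp (t * (c ^ 2 * M ^ 2 / 8)) := by
  have hsum_meas : ∀ t, AEStronglyMeasurable[ℱ t] (fun ω => ∑ i ∈ Finset.Icc 1 t, (Y i ω - r)) μ :=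
    fun t => aestronglyMeasurable_finsetSum _ fun i hi =>
      ((hY_meas i (Finset.mem_Icc.1 hi).1).mono (ℱ.mono (Finset.mem_Icc.1 hi).2)).sub
        aestronglyMeasurable_const
  have hexp_int : ∀ t, Integrable (fun ω => exp (c * ∑ i ∈ Finset.Icc 1 t, (Y i ω - r))) μ :=
    fun t => integrable_exp_mul_of_mem_Icc ((hsum_meas t).mono (ℱ.le t)).aemeasurable
      (a := ∑ i ∈ Finset.Icc 1 t, (0 - r)) (b := ∑ i ∈ Finset.Icc 1 t, (M - r))
      (ae_of_all _ fun ω => ⟨Finset.sum_le_sum fun i hi => by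
          linarith [(hrange i (Finset.mem_Icc.1 hi).1 ω).1],
        Finset.sum_le_sum fun i hi => by linarith [(hrange i (Finset.mem_Icc.1 hi).1 ω).2]⟩)
  induction t with
  | zero => simp
  | succ t ih =>
    have hsplit : (fun ω => exp (c * ∑ i ∈ Finset.Icc 1 (t + 1), (Y i ω - r)))
        = fun ω => exp (c * ∑ i ∈ Finset.Icc 1 t, (Y i ω - r)) * exp (c * (Y (t + 1) ω - r)) := by
      ext ω
      rw [Finset.sum_Icc_succ_top (by omega), mul_add, exp_add]
    have hY_next := ((hY_meas (t + 1) (by omega)).mono (ℱ.le _)).aemeasurable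
    have hrange_next := ae_of_all μ (hrange (t + 1) (by omega))
    have hg_int : Integrable (fun ω => exp (c * (Y (t + 1) ω - r))) μ :=
      integrable_exp_mul_of_mem_Icc (hY_next.sub_const r) (a := 0 - r) (b := M - r)
        (hrange_next.mono fun ω hω => ⟨by linarith [hω.1], by linarith [hω.2]⟩)
    rw [hsplit]
    calc _ ≤ (∫ ω, exp (c * ∑ i ∈ Finset.Icc 1 t, (Y i ω - r)) ∂μ) * exp (c ^ 2 * M ^ 2 / 8) :=
          integral_mul_le_of_condExp_le (ℱ.le t)
            (continuous_exp.comp_aestronglyMeasurable ((hsum_meas t).const_mul c))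
            (ae_of_all _ fun _ => (exp_pos _).le) (hexp_int t) hg_int (hsplit ▸ hexp_int (t + 1))
            (condExp_exp_mul_sub_le (ℱ.le t) hM hY_next hrange_next (hcond (t + 1) (by omega)))
      _ ≤ exp (t * (c ^ 2 * M ^ 2 / 8)) * exp (c ^ 2 * M ^ 2 / 8) := by gcongr
      _ = exp ((t + 1 : ℕ) * (c ^ 2 * M ^ 2 / 8)) := by rw [← exp_add]; push_cast; ring_nf

lemma measure_sum_le_mul_sub_le (hM : 0 < M)
    (hY_meas : ∀ s, 1 ≤ s → AEStronglyMeasurable[ℱ s] (Y s) μ)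
    (hrange : ∀ s, 1 ≤ s → ∀ ω, Y s ω ∈ Set.Icc 0 M)
    (hcond : ∀ s, 1 ≤ s → μ[Y s | ℱ (s - 1)] =ᵐ[μ] fun _ => r) {t : ℕ} (ht : 1 ≤ t)
    {d : ℝ} (hd : 0 ≤ d) :
    μ {ω | ∑ i ∈ Finset.Icc 1 t, Y i ω ≤ t * r - d}
      ≤ ENNReal.ofReal (exp (-(2 * d ^ 2) / (t * M ^ 2))) := by
  have htM : (0 : ℝ) < t * M ^ 2 := by positivity
  -- the Chernoff parameter minimising the resulting bound
  set c := -(4 * d) / (t * M ^ 2) with hc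
  have hc_nonpos : c ≤ 0 := div_nonpos_of_nonpos_of_nonneg (by linarith) htM.le
  have hshift : ∀ ω, c * ∑ i ∈ Finset.Icc 1 t, Y i ω
      = c * (t * r) + c * ∑ i ∈ Finset.Icc 1 t, (Y i ω - r) := fun ω => by
    rw [Finset.sum_sub_distrib, Finset.sum_const, Nat.card_Icc, Nat.add_sub_cancel, nsmul_eq_mul]
    ring
  have hmgf : mgf (fun ω => ∑ i ∈ Finset.Icc 1 t, Y i ω) μ c
      ≤ exp (c * (t * r)) * exp (t * (c ^ 2 * M ^ 2 / 8)) := by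
    simp only [mgf, hshift, exp_add, integral_const_mul]
    gcongr
    exact integral_exp_mul_sum_sub_le hM hY_meas hrange hcond c t
  have hint : Integrable (fun ω => exp (c * ∑ i ∈ Finset.Icc 1 t, Y i ω)) μ :=
    integrable_exp_mul_of_mem_Icc (a := ∑ i ∈ Finset.Icc 1 t, 0) (b := ∑ i ∈ Finset.Icc 1 t, M)
      (Finset.aemeasurable_fun_sum _ fun i hi =>
        ((hY_meas i (Finset.mem_Icc.1 hi).1).mono (ℱ.le i)).aemeasurable)
      (ae_of_all _ fun ω => ⟨Finset.sum_le_sum fun i hi => (hrange i (Finset.mem_Icc.1 hi).1 ω).1,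
        Finset.sum_le_sum fun i hi => (hrange i (Finset.mem_Icc.1 hi).1 ω).2⟩)
  rw [← ofReal_measureReal]
  gcongr
  calc μ.real {ω | ∑ i ∈ Finset.Icc 1 t, Y i ω ≤ t * r - d}
      ≤ exp (-c * (t * r - d)) * mgf (fun ω => ∑ i ∈ Finset.Icc 1 t, Y i ω) μ c :=
        measure_le_le_exp_mul_mgf _ hc_nonpos hint
    _ ≤ exp (-c * (t * r - d)) * (exp (c * (t * r)) * exp (t * (c ^ 2 * M ^ 2 / 8))) := by
        gcongr
    _ = exp (-(2 * d ^ 2) / (t * M ^ 2)) := by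
        rw [← exp_add, ← exp_add, hc]; congr 1; field_simp; ring

lemma measure_mean_add_deviation_le_le (hM : 0 < M)
    (hY_meas : ∀ s, 1 ≤ s → AEStronglyMeasurable[ℱ s] (Y s) μ)
    (hrange : ∀ s, 1 ≤ s → ∀ ω, Y s ω ∈ Set.Icc 0 M)
    (hcond : ∀ s, 1 ≤ s → μ[Y s | ℱ (s - 1)] =ᵐ[μ] fun _ => r) {t : ℕ} (ht : 1 ≤ t)
    {ε a b : ℝ} (ha : 0 < a) (hb : 0 < b) (hεr : ε < r) :
    μ {ω | 1 / (t : ℝ) * ∑ i ∈ Finset.Icc 1 t, Y i ω + M * √(log (b / a) / (2 * t)) ≤ ε}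
      ≤ ENNReal.ofReal (a / b) := by
  rcases le_or_gt 1 (a / b) with hab | hab
  · exact prob_le_one.trans (by simpa using ENNReal.ofReal_le_ofReal hab)
  have ht0 : (0 : ℝ) < t := by exact_mod_cast ht
  have hL : 0 ≤ log (b / a) / (2 * t) :=
    div_nonneg (log_nonneg ((one_le_div ha).2 ((div_lt_one hb).1 hab).le)) (by positivity)
  set δ := M * √(log (b / a) / (2 * t))
  have hδ : 0 ≤ δ := by positivity
  calc μ {ω | 1 / (t : ℝ) * ∑ i ∈ Finset.Icc 1 t, Y i ω + δ ≤ ε}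
      ≤ μ {ω | ∑ i ∈ Finset.Icc 1 t, Y i ω ≤ t * r - (t * (r - ε) + t * δ)} := by
        refine measure_mono fun ω (hω : 1 / (t : ℝ) * ∑ i ∈ Finset.Icc 1 t, Y i ω + δ ≤ ε) => ?_
        have := mul_le_mul_of_nonneg_left hω ht0.le
        field_simp at this
        change ∑ i ∈ Finset.Icc 1 t, Y i ω ≤ _
        linarith
    _ ≤ ENNReal.ofReal (exp (-(2 * (t * (r - ε) + t * δ) ^ 2) / (t * M ^ 2))) :=
        measure_sum_le_mul_sub_le hM hY_meas hrange hcond ht (by nlinarith)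
    _ ≤ ENNReal.ofReal (exp (-(2 * (t * δ) ^ 2) / (t * M ^ 2))) := by
        gcongr
        nlinarith
    _ = ENNReal.ofReal (a / b) := by
        congr 1
        rw [show -(2 * (t * δ) ^ 2) / (t * M ^ 2) = -log (b / a) by
          simp only [δ, mul_pow, sq_sqrt hL]; field_simp,
          exp_neg, exp_log (div_pos hb ha), inv_div]

end Azuma

end Hoeffding

lemma exists_lt_apply_of_lt_apply_dite_max' {α β : Type*} [LinearOrder α] [Preorder β]
    {s : Finset α} {R : α → β} {d : α} {ε : β} (hd : R d ≤ ε)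
    (h : ε < R (if hs : s.Nonempty then s.max' hs else d)) : ∃ v ∈ s, ε < R v := by
  split_ifs at h with hs
  · exact ⟨_, s.max'_mem hs, h⟩
  · exact absurd (h.trans_le hd) (lt_irrefl ε)

lemma measure_lt_apply_dite_max'_filter_le {Ω α : Type*} [MeasurableSpace Ω] {μ : Measure Ω}
    [LinearOrder α] (grid : Finset α) {R : α → ℝ} {S : α → Ω → ℝ} {d : α} {ε δ : ℝ}
    (hd : R d ≤ ε)
    (hS : ∀ v ∈ grid, ε < R v → μ {ω | S v ω ≤ ε} ≤ ENNReal.ofReal (δ / (grid.card : ℝ))) :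
    μ {ω | ε < R (if h : (grid.filter fun v => S v ω ≤ ε).Nonempty
        then (grid.filter fun v => S v ω ≤ ε).max' h else d)} ≤ ENNReal.ofReal δ := by
  set bad := grid.filter fun v => ε < R v
  calc μ {ω | ε < R (if h : (grid.filter fun v => S v ω ≤ ε).Nonempty
        then (grid.filter fun v => S v ω ≤ ε).max' h else d)}
      ≤ μ (⋃ v ∈ bad, {ω | S v ω ≤ ε}) := measure_mono fun ω hω => by
        obtain ⟨v, hv, hRv⟩ := exists_lt_apply_of_lt_apply_dite_max' hd hω
        obtain ⟨hv, hSv⟩ := Finset.mem_filter.1 hv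
        exact Set.mem_biUnion (Finset.mem_filter.2 ⟨hv, hRv⟩) hSv
    _ ≤ ∑ v ∈ bad, μ {ω | S v ω ≤ ε} := measure_biUnion_finset_le _ _
    _ ≤ bad.card • ENNReal.ofReal (δ / (grid.card : ℝ)) := Finset.sum_le_card_nsmul _ _ _
        fun v hv => hS v (Finset.mem_filter.1 hv).1 (Finset.mem_filter.1 hv).2
    _ ≤ grid.card • ENNReal.ofReal (δ / (grid.card : ℝ)) := by
        gcongr
        exact Finset.filter_subset _ _
    _ ≤ ENNReal.ofReal δ := by
        rcases grid.card.eq_zero_or_pos with h0 | hpos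
        · simp [h0]
        · rw [nsmul_eq_mul, ← ENNReal.ofReal_natCast, ← ENNReal.ofReal_mul (Nat.cast_nonneg _),
            mul_div_cancel₀ _ (by positivity)]

lemma measure_setOf_exists_le_ofReal_of_hasSum {Ω : Type*} [MeasurableSpace Ω] {μ : Measure Ω}
    {P : ℕ → Ω → Prop} {a : ℕ → ℝ} {α : ℝ} (ha : ∀ t, 0 ≤ a t) (hsum : HasSum a α)
    (hP : ∀ t, μ {ω | P t ω} ≤ ENNReal.ofReal (a t)) :
    μ {ω | ∃ t, P t ω} ≤ ENNReal.ofReal α := by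
  rw [Set.ofPred_exists, ← hsum.tsum_eq, ENNReal.ofReal_tsum_of_nonneg ha hsum.summable]
  exact (measure_iUnion_le _).trans (ENNReal.tsum_le_tsum hP)

lemma hasSum_six_mul_div_pi_sq_mul_sq (α : ℝ) :
    HasSum (fun t : ℕ => 6 * α / (Real.pi ^ 2 * (t : ℝ) ^ 2)) α := by
  have h := hasSum_zeta_two.mul_left (6 * α / Real.pi ^ 2)
  rw [show 6 * α / Real.pi ^ 2 * (Real.pi ^ 2 / 6) = α by field_simp [Real.pi_ne_zero]] at h
  simpa only [mul_one_div, div_div] using h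

-- The propensity `π` need not be measurable; it is replaced by the conditional expectation
-- that agrees with it almost surely.
lemma aestronglyMeasurable_ipsEstimator {Ω : Type*} {m mPast m0 : MeasurableSpace Ω}
    {μ : Measure[m0] Ω} (hPast : mPast ≤ m) {l U ξ π : Ω → ℝ} (hl : Measurable[m] l)
    (hU : Measurable[m] U) (hξ : Measurable[m] ξ)
    (hξπ : μ[ξ | mPast ⊔ MeasurableSpace.comap l Real.measurableSpace
      ⊔ MeasurableSpace.comap U Real.measurableSpace] =ᵐ[μ] π) (ρ v : ℝ) :
    AEStronglyMeasurable[m]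
      (fun ω => (1 - ρ) * l ω * ξ ω * {ω' | U ω' < v}.indicator (fun _ => (1 : ℝ)) ω / π ω) μ :=
  ⟨_, (((((hl.const_mul _).mul hξ).mul (measurable_const.indicator (hU measurableSet_Iio))).div
      (stronglyMeasurable_condExp.mono (sup_le (sup_le hPast (measurable_iff_comap_le.1 hl))
        (measurable_iff_comap_le.1 hU))).measurable).stronglyMeasurable),
    by filter_upwards [hξπ] with ω hω; rw [Pi.div_apply, hω]; rfl⟩

theorem stmt_7_general {Ω : Type*} {m0 : MeasurableSpace Ω} {μ : Measure Ω} [IsProbabilityMeasure μ]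
    (ℱ : MeasureTheory.Filtration ℕ m0)
    (α ε : ℝ) (hα : α ∈ Set.Ioo (0 : ℝ) 1) (hε : ε ∈ Set.Ioo (0 : ℝ) 1)
    -- constant exploration probability ρ, M̃ = (1−ρ)/ρ, α_t = 6α/(π²t²)
    (ρ : ℝ) (hρ : ρ ∈ Set.Ioo (0 : ℝ) 1)
    (Mtil : ℝ) (hMtil : Mtil = (1 - ρ) / ρ)
    (αt : ℕ → ℝ) (hαt : ∀ t : ℕ, αt t = 6 * α / (Real.pi ^ 2 * (t : ℝ) ^ 2))
    -- a finite threshold grid U ⊆ [0,1] of cardinality N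
    (grid : Finset ℝ)
    (N : ℕ) (hN : grid.card = N)
    -- data stream and routing variables
    (l U uhat ξ π : ℕ → Ω → ℝ)
    (hl_meas : ∀ s, 1 ≤ s → Measurable[ℱ s] (l s))
    (hU_meas : ∀ s, 1 ≤ s → Measurable[ℱ s] (U s))
    (hU_mem : ∀ s ω, 1 ≤ s → U s ω ∈ Set.Icc (0 : ℝ) 1)
    (hξ_meas : ∀ s, 1 ≤ s → Measurable[ℱ s] (ξ s))
    (hξcond : ∀ s, 1 ≤ s →
      μ[ξ s | (ℱ (s - 1) : MeasurableSpace Ω)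
          ⊔ MeasurableSpace.comap (l s) Real.measurableSpace
          ⊔ MeasurableSpace.comap (U s) Real.measurableSpace] =ᵐ[μ] π s)
    -- the IPS estimators Z_i(u) and the risk R(u)
    (Z : ℝ → ℕ → Ω → ℝ)
    (hZ : ∀ v s ω, 1 ≤ s → Z v s ω = (1 - ρ) * l s ω * ξ s ω *
      Set.indicator {ω' | U s ω' < v} (fun _ => (1 : ℝ)) ω / π s ω)
    (R : ℝ → ℝ)
    (hR : ∀ v, R v = (1 - ρ) *
      ∫ ω, l 1 ω * Set.indicator {ω' | U 1 ω' < v} (fun _ => (1 : ℝ)) ω ∂μ)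
    -- for each fixed u ∈ U: Z_i(u) ∈ [0, M̃] and E[Z_i(u) | F_{i-1}] = R(u) a.s.
    (hZ_range : ∀ v ∈ grid, ∀ s, 1 ≤ s → ∀ ω, Z v s ω ∈ Set.Icc (0 : ℝ) Mtil)
    (hZ_cond : ∀ v ∈ grid, ∀ s, 1 ≤ s → μ[Z v s | ℱ (s - 1)] =ᵐ[μ] fun _ => R v)
    -- the UCB threshold û_t, û_t = 0 if the feasible set is empty
    (huhat : ∀ t ω, 1 ≤ t → uhat t ω =
      if h : (grid.filter (fun v =>
          (1 / (t : ℝ)) * ∑ i ∈ Finset.Icc 1 t, Z v i ω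
            + Mtil * Real.sqrt (Real.log (N / αt t) / (2 * (t : ℝ))) ≤ ε)).Nonempty
      then (grid.filter (fun v =>
          (1 / (t : ℝ)) * ∑ i ∈ Finset.Icc 1 t, Z v i ω
            + Mtil * Real.sqrt (Real.log (N / αt t) / (2 * (t : ℝ))) ≤ ε)).max' h
      else 0) :
    μ {ω | ∃ t : ℕ, 1 ≤ t ∧ ε < R (uhat t ω)} ≤ ENNReal.ofReal α := by
  have hMtil_pos : 0 < Mtil := hMtil ▸ div_pos (sub_pos.2 hρ.2) hρ.1
  have hR0 : R 0 = 0 := by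
    rw [hR, integral_eq_zero_of_ae (ae_of_all _ fun ω => ?_), mul_zero]
    simp [(hU_mem 1 ω le_rfl).1]
  have hZ_meas : ∀ v s, 1 ≤ s → AEStronglyMeasurable[ℱ s] (Z v s) μ := fun v s hs => by
    rw [funext fun ω => hZ v s ω hs]
    exact aestronglyMeasurable_ipsEstimator (ℱ.mono (Nat.sub_le s 1)) (hl_meas s hs)
      (hU_meas s hs) (hξ_meas s hs) (hξcond s hs) ρ v
  have hαt_nonneg : ∀ t, 0 ≤ αt t := fun t =>
    hαt t ▸ div_nonneg (by linarith [hα.1]) (by positivity)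
  refine measure_setOf_exists_le_ofReal_of_hasSum hαt_nonneg
    (by simpa only [← hαt] using hasSum_six_mul_div_pi_sq_mul_sq α) fun t => ?_
  rcases Nat.lt_or_ge t 1 with ht | ht
  · simp [ht.not_ge]
  have ht_pos : (0 : ℝ) < t := Nat.cast_pos.2 ht
  have hαt_pos : 0 < αt t := hαt t ▸ div_pos (by linarith [hα.1]) (by positivity)
  let S : ℝ → Ω → ℝ := fun v ω => 1 / (t : ℝ) * ∑ i ∈ Finset.Icc 1 t, Z v i ω
    + Mtil * √(Real.log (N / αt t) / (2 * t))
  refine (measure_mono fun ω hω => ?_).trans (measure_lt_apply_dite_max'_filter_le (S := S) grid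
    (hR0.trans_le hε.1.le) fun v hv hRv => ?_)
  · have hR_uhat := hω.2
    rw [huhat t ω ht] at hR_uhat
    exact hR_uhat
  · have hN_pos : (0 : ℝ) < N := by rw [← hN]; exact_mod_cast Finset.card_pos.2 ⟨v, hv⟩
    rw [hN]
    exact measure_mean_add_deviation_le_le hMtil_pos (hZ_meas v) (hZ_range v hv) (hZ_cond v hv) ht
      hαt_pos hN_pos hRv

/-- Safety of IPS+Hoeff: with the Hoeffding-style upper-confidence-bound threshold
`û_t = max{ u ∈ U : (1/t)·Σ_{i≤t} Z_i(u) + M̃·√(log(N/α_t)/(2t)) ≤ ε }`,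
one has `P(∃ t ≥ 1 : R(û_t) > ε) ≤ α`. -/
theorem stmt_7 {Ω : Type*} {m0 : MeasurableSpace Ω} {μ : Measure Ω} [IsProbabilityMeasure μ]
    (ℱ : MeasureTheory.Filtration ℕ m0)
    (α ε : ℝ) (hα : α ∈ Set.Ioo (0 : ℝ) 1) (hε : ε ∈ Set.Ioo (0 : ℝ) 1)
    -- constant exploration probability ρ, M̃ = (1−ρ)/ρ, α_t = 6α/(π²t²)
    (ρ : ℝ) (hρ : ρ ∈ Set.Ioo (0 : ℝ) 1)
    (Mtil : ℝ) (hMtil : Mtil = (1 - ρ) / ρ)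
    (αt : ℕ → ℝ) (hαt : ∀ t : ℕ, αt t = 6 * α / (Real.pi ^ 2 * (t : ℝ) ^ 2))
    -- a finite threshold grid U ⊆ [0,1] of cardinality N
    (grid : Finset ℝ) (hgrid : ↑grid ⊆ Set.Icc (0 : ℝ) 1)
    (N : ℕ) (hN : grid.card = N)
    -- data stream and routing variables
    (l U uhat ξ π : ℕ → Ω → ℝ)
    (hl_meas : ∀ s, 1 ≤ s → Measurable[ℱ s] (l s))
    (hU_meas : ∀ s, 1 ≤ s → Measurable[ℱ s] (U s))
    (hl_mem : ∀ s ω, 1 ≤ s → l s ω ∈ Set.Icc (0 : ℝ) 1)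
    (hU_mem : ∀ s ω, 1 ≤ s → U s ω ∈ Set.Icc (0 : ℝ) 1)
    (hξ_meas : ∀ s, 1 ≤ s → Measurable[ℱ s] (ξ s))
    (hξ01 : ∀ s ω, ξ s ω = 0 ∨ ξ s ω = 1)
    (hπ : ∀ s ω, 1 ≤ s → π s ω =
      Set.indicator {ω' | uhat (s - 1) ω' ≤ U s ω'} (fun _ => (1 : ℝ)) ω
        + ρ * Set.indicator {ω' | U s ω' < uhat (s - 1) ω'} (fun _ => (1 : ℝ)) ω)
    (hξcond : ∀ s, 1 ≤ s →
      μ[ξ s | (ℱ (s - 1) : MeasurableSpace Ω)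
          ⊔ MeasurableSpace.comap (l s) Real.measurableSpace
          ⊔ MeasurableSpace.comap (U s) Real.measurableSpace] =ᵐ[μ] π s)
    -- (l_t, U_t) i.i.d. and independent of the past
    (hident : ∀ s t : ℕ, 1 ≤ s → 1 ≤ t →
      IdentDistrib (fun ω => (l s ω, U s ω)) (fun ω => (l t ω, U t ω)) μ μ)
    (hindep : iIndepFun
      (fun s ω => (l (s + 1) ω, U (s + 1) ω)) μ)
    (hindep_past : ∀ s, 1 ≤ s →
      Indep (MeasurableSpace.comap (fun ω => (l s ω, U s ω))
        (inferInstance : MeasurableSpace (ℝ × ℝ))) (ℱ (s - 1)) μ)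
    -- the IPS estimators Z_i(u) and the risk R(u)
    (Z : ℝ → ℕ → Ω → ℝ)
    (hZ : ∀ v s ω, 1 ≤ s → Z v s ω = (1 - ρ) * l s ω * ξ s ω *
      Set.indicator {ω' | U s ω' < v} (fun _ => (1 : ℝ)) ω / π s ω)
    (R : ℝ → ℝ)
    (hR : ∀ v, R v = (1 - ρ) *
      ∫ ω, l 1 ω * Set.indicator {ω' | U 1 ω' < v} (fun _ => (1 : ℝ)) ω ∂μ)
    -- for each fixed u ∈ U: Z_i(u) ∈ [0, M̃] and E[Z_i(u) | F_{i-1}] = R(u) a.s.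
    (hZ_range : ∀ v ∈ grid, ∀ s, 1 ≤ s → ∀ ω, Z v s ω ∈ Set.Icc (0 : ℝ) Mtil)
    (hZ_cond : ∀ v ∈ grid, ∀ s, 1 ≤ s → μ[Z v s | ℱ (s - 1)] =ᵐ[μ] fun _ => R v)
    -- the UCB threshold û_t, û_t = 0 if the feasible set is empty
    (huhat : ∀ t ω, 1 ≤ t → uhat t ω =
      if h : (grid.filter (fun v =>
          (1 / (t : ℝ)) * ∑ i ∈ Finset.Icc 1 t, Z v i ω
            + Mtil * Real.sqrt (Real.log (N / αt t) / (2 * (t : ℝ))) ≤ ε)).Nonempty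
      then (grid.filter (fun v =>
          (1 / (t : ℝ)) * ∑ i ∈ Finset.Icc 1 t, Z v i ω
            + Mtil * Real.sqrt (Real.log (N / αt t) / (2 * (t : ℝ))) ≤ ε)).max' h
      else 0) :
    μ {ω | ∃ t : ℕ, 1 ≤ t ∧ ε < R (uhat t ω)} ≤ ENNReal.ofReal α :=
  stmt_7_general ℱ α ε hα hε ρ hρ Mtil hMtil αt hαt grid N hN l U uhat ξ π hl_meas hU_meas hU_mem
    hξ_meas hξcond Z hZ R hR hZ_range hZ_cond huhat
end

section
/- Let T ≥ 1, let a_1, …, a_T be nonnegative real numbers, let β > 0 and γ > 0, and set S_0 = β and S_t = Σ_{i=1}^t a_i + β for 1 ≤ t ≤ T. If a_t ≤ γ·S_{t-1} holds for all 1 ≤ t ≤ T, then Σ_{t=1}^T a_t/S_{t-1} ≤ C(γ)·log(S_T/β), where C(γ) = γ/log(1 + γ). -/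
/-!
Write `C = γ / log (1 + γ)`. By concavity, `log (1 + x)` lies above its chord on `[0, γ]`, i.e.
`x ≤ C log (1 + x)` for `0 ≤ x ≤ γ`. Applied to `x = a_t / S_{t-1} = S_t / S_{t-1} - 1`, which lies
in `[0, γ]` by hypothesis, this bounds each summand by `C (log S_t - log S_{t-1})`, and these
increments telescope to `C log (S_T / β)`.
-/

open Finset Real

section GrowthRatio

variable {γ : ℝ}

lemma le_div_log_one_add_mul_log_one_add {x : ℝ} (hγ : 0 < γ) (hx : 0 ≤ x) (hxγ : x ≤ γ) :
    x ≤ γ / log (1 + γ) * log (1 + x) := by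
  have hchord : (γ - x) / γ * log 1 + x / γ * log (1 + γ) ≤
      log ((γ - x) / γ * 1 + x / γ * (1 + γ)) :=
    strictConcaveOn_log_Ioi.concaveOn.2 (by norm_num : (1 : ℝ) ∈ Set.Ioi 0)
      (by simp only [Set.mem_Ioi]; linarith) (div_nonneg (by linarith) hγ.le)
      (div_nonneg hx hγ.le) (by field_simp; ring)
  have hpoint : (γ - x) / γ * 1 + x / γ * (1 + γ) = 1 + x := by field_simp; ring
  rw [hpoint, log_one, mul_zero, zero_add] at hchord
  rw [div_mul_eq_mul_div, le_div_iff₀ (log_pos (by linarith))]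
  calc x * log (1 + γ) = γ * (x / γ * log (1 + γ)) := by field_simp
    _ ≤ γ * log (1 + x) := by gcongr

lemma sub_div_le_div_log_one_add_mul_log_div {s s' : ℝ} (hγ : 0 < γ) (hs : 0 < s)
    (hss' : s ≤ s') (hs' : s' ≤ (1 + γ) * s) :
    (s' - s) / s ≤ γ / log (1 + γ) * log (s' / s) := by
  have hratio : 1 + (s' - s) / s = s' / s := by field_simp; ring
  rw [← hratio]
  exact le_div_log_one_add_mul_log_one_add hγ (div_nonneg (by linarith) hs.le)
    (by rw [div_le_iff₀ hs]; linarith)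

theorem sum_range_sub_div_le_div_log_one_add_mul_log_div (hγ : 0 < γ) (S : ℕ → ℝ) (T : ℕ)
    (hS₀ : 0 < S 0) (hmono : ∀ t < T, S t ≤ S (t + 1))
    (hgrowth : ∀ t < T, S (t + 1) ≤ (1 + γ) * S t) :
    ∑ t ∈ range T, (S (t + 1) - S t) / S t ≤ γ / log (1 + γ) * log (S T / S 0) := by
  have hpos : ∀ t ≤ T, 0 < S t := by
    intro t ht
    induction t with
    | zero => exact hS₀
    | succ t ih => exact (ih (by omega)).trans_le (hmono t (by omega))
  calc ∑ t ∈ range T, (S (t + 1) - S t) / S t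
      ≤ ∑ t ∈ range T, γ / log (1 + γ) * (log (S (t + 1)) - log (S t)) := by
        refine sum_le_sum fun t ht => ?_
        have htT := mem_range.1 ht
        rw [← log_div (hpos (t + 1) htT).ne' (hpos t htT.le).ne']
        exact sub_div_le_div_log_one_add_mul_log_div hγ (hpos t htT.le) (hmono t htT)
          (hgrowth t htT)
    _ = γ / log (1 + γ) * log (S T / S 0) := by
        rw [← mul_sum, sum_range_sub (fun t => log (S t)), log_div (hpos T le_rfl).ne' hS₀.ne']

end GrowthRatio

theorem stmt_8_general (T : ℕ) (a : ℕ → ℝ)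
    (ha : ∀ t, 1 ≤ t → t ≤ T → 0 ≤ a t)
    (β γ : ℝ) (hβ : 0 < β) (hγ : 0 < γ)
    (S : ℕ → ℝ)
    (hS0 : S 0 = β)
    (hS : ∀ t, 1 ≤ t → t ≤ T → S t = (∑ i ∈ Finset.Icc 1 t, a i) + β)
    (hbound : ∀ t, 1 ≤ t → t ≤ T → a t ≤ γ * S (t - 1)) :
    ∑ t ∈ Finset.Icc 1 T, a t / S (t - 1) ≤
      (γ / Real.log (1 + γ)) * Real.log (S T / β) := by
  have hpartial : ∀ t ≤ T, S t = ∑ i ∈ Icc 1 t, a i + β := by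
    intro t ht
    rcases t with _ | t
    · simp [hS0]
    · exact hS _ (by omega) ht
  have hstep : ∀ t < T, S (t + 1) = S t + a (t + 1) := by
    intro t ht
    rw [hpartial _ ht, hpartial _ ht.le, sum_Icc_succ_top (by omega)]
    ring
  have hsum : ∑ t ∈ Icc 1 T, a t / S (t - 1) = ∑ t ∈ range T, (S (t + 1) - S t) / S t := by
    calc _ = ∑ t ∈ range T, a (t + 1) / S (t + 1 - 1) := by
          rw [range_eq_Ico, sum_Ico_add' (fun t => a t / S (t - 1))]; rfl
      _ = _ := sum_congr rfl fun t ht => by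
          rw [hstep t (mem_range.1 ht), Nat.add_sub_cancel, add_sub_cancel_left]
  rw [hsum, ← hS0]
  refine sum_range_sub_div_le_div_log_one_add_mul_log_div hγ S T (hS0 ▸ hβ) (fun t ht => ?_)
    (fun t ht => ?_)
  · rw [hstep t ht]
    linarith [ha (t + 1) (by omega) (by omega)]
  · rw [hstep t ht]
    have hbound_t := hbound (t + 1) (by omega) (by omega)
    rw [Nat.add_sub_cancel] at hbound_t
    linarith

/-- Partial-sum lemma: if `a_t ≤ γ·S_{t-1}` where `S_t = Σ_{i≤t} a_i + β`, then
`Σ_{t=1}^T a_t / S_{t-1} ≤ (γ / log(1+γ)) · log(S_T / β)`. -/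
theorem stmt_8 (T : ℕ) (hT : 1 ≤ T) (a : ℕ → ℝ)
    (ha : ∀ t, 1 ≤ t → t ≤ T → 0 ≤ a t)
    (β γ : ℝ) (hβ : 0 < β) (hγ : 0 < γ)
    (S : ℕ → ℝ)
    (hS0 : S 0 = β)
    (hS : ∀ t, 1 ≤ t → t ≤ T → S t = (∑ i ∈ Finset.Icc 1 t, a i) + β)
    (hbound : ∀ t, 1 ≤ t → t ≤ T → a t ≤ γ * S (t - 1)) :
    ∑ t ∈ Finset.Icc 1 T, a t / S (t - 1) ≤
      (γ / Real.log (1 + γ)) * Real.log (S T / β) :=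
  stmt_8_general T a ha β γ hβ hγ S hS0 hS hbound
end

section
/- Let (F_t)_{t≥0} be a filtration on a probability space, let (D_t)_{t≥1} be a uniformly bounded sequence of real random variables with D_t F_t-measurable, and let (λ_t)_{t≥1} be bounded nonnegative random variables with λ_t F_{t-1}-measurable. Suppose there is δ > 0 such that 1 + λ_t·D_t ≥ δ almost surely for all t. Then the process defined by Y_0 = 1 and Y_t = Π_{i=1}^t (1 + λ_i·D_i)/(1 + λ_i·E[D_i | F_{i-1}]) is a martingale with respect to (F_t)_{t≥0}, and E[Y_t] = 1 for every t ≥ 0. -/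
/-!
Write `N_i = 1 + λ_i D_i` and `M_i = 1 + λ_i E[D_i | F_{i-1}]`. Since `λ_i` is
`F_{i-1}`-measurable, `M_i` is a version of `E[N_i | F_{i-1}]`, and `N_i ≥ δ` forces `M_i ≥ δ`.
Hence each factor `N_i / M_i` is bounded and has conditional expectation `1` given `F_{i-1}`,
so multiplying the `F_{i-1}`-measurable integrable `Y_{i-1}` by it preserves conditional
expectations.
-/

open MeasureTheory

namespace MeasureTheory

variable {Ω : Type*} {m m0 : MeasurableSpace Ω} {μ : Measure Ω}

lemma ae_const_le_condExp [IsFiniteMeasure μ] (hm : m ≤ m0) {f : Ω → ℝ} {c : ℝ}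
    (hf : Integrable f μ) (hcf : ∀ᵐ ω ∂μ, c ≤ f ω) : ∀ᵐ ω ∂μ, c ≤ μ[f | m] ω := by
  have h := condExp_mono (m := m) (integrable_const c) hf hcf
  rwa [condExp_const hm] at h

lemma condExp_div_eq_one_of_ae_eq_condExp {f g : Ω → ℝ} (hg : StronglyMeasurable[m] g)
    (hf : Integrable f μ) (hfg : Integrable (f / g) μ) (hg_eq : g =ᵐ[μ] μ[f | m])
    (hg_ne : ∀ᵐ ω ∂μ, g ω ≠ 0) : μ[f / g | m] =ᵐ[μ] 1 := by
  have hg_inv : StronglyMeasurable[m] g⁻¹ := hg.measurable.inv.stronglyMeasurable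
  rw [div_eq_mul_inv] at hfg ⊢
  filter_upwards [condExp_mul_of_stronglyMeasurable_right hg_inv hfg hf, hg_eq, hg_ne]
    with ω h_pull h_eq h_ne
  rw [h_pull, Pi.mul_apply, ← h_eq, Pi.inv_apply, mul_inv_cancel₀ h_ne, Pi.one_apply]

theorem martingale_of_succ_eq_mul [IsFiniteMeasure μ] {ℱ : Filtration ℕ m0} {Y R : ℕ → Ω → ℝ}
    (hY₀_meas : StronglyMeasurable[ℱ 0] (Y 0)) (hY₀_int : Integrable (Y 0) μ)
    (hR_meas : ∀ n, StronglyMeasurable[ℱ (n + 1)] (R n))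
    (hR_bdd : ∀ n, ∃ C, ∀ᵐ ω ∂μ, |R n ω| ≤ C) (hR_condExp : ∀ n, μ[R n | ℱ n] =ᵐ[μ] 1)
    (hY_succ : ∀ n, Y (n + 1) = Y n * R n) : Martingale Y ℱ μ := by
  have hR_int : ∀ n, Integrable (R n) μ := fun n ↦
    let ⟨C, hC⟩ := hR_bdd n
    .of_bound ((hR_meas n).mono (ℱ.le _)).aestronglyMeasurable C hC
  have hadp : StronglyAdapted ℱ Y := by
    intro n
    induction n with
    | zero => exact hY₀_meas
    | succ n ih => rw [hY_succ]; exact (ih.mono (ℱ.mono n.le_succ)).mul (hR_meas n)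
  have hint : ∀ n, Integrable (Y n) μ := by
    intro n
    induction n with
    | zero => exact hY₀_int
    | succ n ih =>
      obtain ⟨C, hC⟩ := hR_bdd n
      rw [hY_succ]
      exact ih.mul_bdd ((hR_meas n).mono (ℱ.le _)).aestronglyMeasurable hC
  refine martingale_nat hadp hint fun n ↦ ?_
  rw [hY_succ]
  filter_upwards [condExp_mul_of_stronglyMeasurable_left (hadp n) (hY_succ n ▸ hint (n + 1))
    (hR_int n), hR_condExp n] with ω h_pull h_one
  rw [h_pull, Pi.mul_apply, h_one, Pi.one_apply, mul_one]

lemma Martingale.integral_eq [IsFiniteMeasure μ] {ℱ : Filtration ℕ m0} {Y : ℕ → Ω → ℝ}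
    (hY : Martingale Y ℱ μ) (t : ℕ) : ∫ ω, Y t ω ∂μ = ∫ ω, Y 0 ω ∂μ := by
  simpa using (hY.setIntegral_eq t.zero_le MeasurableSet.univ).symm

noncomputable def likelihoodRatio (μ : Measure Ω) (m : MeasurableSpace Ω) (lam D : Ω → ℝ) :
    Ω → ℝ :=
  fun ω ↦ (1 + lam ω * D ω) / (1 + lam ω * μ[D | m] ω)

lemma measurable_likelihoodRatio {m' : MeasurableSpace Ω} {lam D : Ω → ℝ} (hm : m ≤ m')
    (hlam : Measurable[m'] lam) (hD : Measurable[m'] D) :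
    Measurable[m'] (likelihoodRatio μ m lam D) :=
  (measurable_const.add (hlam.mul hD)).div
    (measurable_const.add (hlam.mul (stronglyMeasurable_condExp.measurable.mono hm le_rfl)))

section LikelihoodRatio

variable [IsFiniteMeasure μ] {lam D : Ω → ℝ} {δ C : ℝ}

lemma condExp_one_add_mul (hm : m ≤ m0) (hlam : StronglyMeasurable[m] lam)
    (hD : Integrable D μ) (hlamD : Integrable (lam * D) μ) :
    μ[fun ω ↦ 1 + lam ω * D ω | m] =ᵐ[μ] fun ω ↦ 1 + lam ω * μ[D | m] ω := by
  have h_add := condExp_add (m := m) (integrable_const (1 : ℝ)) hlamD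
  rw [condExp_const hm] at h_add
  filter_upwards [h_add, condExp_mul_of_stronglyMeasurable_left hlam hlamD hD]
    with ω h_add h_pull
  exact h_add.trans (congrArg (1 + ·) h_pull)

lemma ae_le_one_add_mul_condExp (hm : m ≤ m0) (hlam : StronglyMeasurable[m] lam)
    (hD : Integrable D μ) (hlamD : Integrable (lam * D) μ)
    (hconstr : ∀ᵐ ω ∂μ, δ ≤ 1 + lam ω * D ω) : ∀ᵐ ω ∂μ, δ ≤ 1 + lam ω * μ[D | m] ω := by
  filter_upwards [ae_const_le_condExp hm ((integrable_const 1).add hlamD) hconstr,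
    condExp_one_add_mul hm hlam hD hlamD] with ω h_le h_eq
  exact h_le.trans_eq h_eq

lemma ae_abs_likelihoodRatio_le (hm : m ≤ m0) (hlam : Measurable[m] lam) (hD : Measurable D)
    (hD_int : Integrable D μ) (hlamD : ∀ ω, |lam ω * D ω| ≤ C) (hδ : 0 < δ)
    (hconstr : ∀ᵐ ω ∂μ, δ ≤ 1 + lam ω * D ω) :
    ∀ᵐ ω ∂μ, |likelihoodRatio μ m lam D ω| ≤ (1 + C) / δ := by
  have hlamD_int : Integrable (lam * D) μ :=
    .of_bound ((hlam.mono hm le_rfl).mul hD).aestronglyMeasurable C (ae_of_all _ hlamD)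
  filter_upwards [ae_le_one_add_mul_condExp hm hlam.stronglyMeasurable hD_int hlamD_int hconstr]
    with ω hω
  have h_num : |1 + lam ω * D ω| ≤ 1 + C := (abs_add_le _ _).trans (by simpa using hlamD ω)
  rw [likelihoodRatio, abs_div, abs_of_pos (hδ.trans_le hω)]
  exact div_le_div₀ ((abs_nonneg _).trans h_num) h_num hδ hω

lemma condExp_likelihoodRatio (hm : m ≤ m0) (hlam : Measurable[m] lam) (hD : Measurable D)
    (hD_int : Integrable D μ) (hlamD : ∀ ω, |lam ω * D ω| ≤ C) (hδ : 0 < δ)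
    (hconstr : ∀ᵐ ω ∂μ, δ ≤ 1 + lam ω * D ω) :
    μ[likelihoodRatio μ m lam D | m] =ᵐ[μ] 1 := by
  have hlamD_int : Integrable (lam * D) μ :=
    .of_bound ((hlam.mono hm le_rfl).mul hD).aestronglyMeasurable C (ae_of_all _ hlamD)
  refine condExp_div_eq_one_of_ae_eq_condExp
    (measurable_const.add (hlam.mul stronglyMeasurable_condExp.measurable)).stronglyMeasurable
    ((integrable_const 1).add hlamD_int)
    (.of_bound (measurable_likelihoodRatio hm (hlam.mono hm le_rfl) hD).aestronglyMeasurable _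
      (ae_abs_likelihoodRatio_le hm hlam hD hD_int hlamD hδ hconstr))
    (condExp_one_add_mul hm hlam.stronglyMeasurable hD_int hlamD_int).symm ?_
  filter_upwards [ae_le_one_add_mul_condExp hm hlam.stronglyMeasurable hD_int hlamD_int hconstr]
    with ω hω using (hδ.trans_le hω).ne'

end LikelihoodRatio

end MeasureTheory

/-- The likelihood-ratio process
`Y_t = Π_{i=1}^t (1 + λ_i·D_i)/(1 + λ_i·E[D_i | F_{i-1}])` is a martingale with
`E[Y_t] = 1` for every `t`. -/
theorem stmt_10 {Ω : Type*} {m0 : MeasurableSpace Ω} {μ : Measure Ω} [IsProbabilityMeasure μ]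
    (ℱ : MeasureTheory.Filtration ℕ m0)
    (D lam : ℕ → Ω → ℝ)
    (hD_meas : ∀ t, 1 ≤ t → Measurable[ℱ t] (D t))
    (hD_bdd : ∃ C : ℝ, ∀ t ω, |D t ω| ≤ C)
    (hlam_meas : ∀ t, 1 ≤ t → Measurable[ℱ (t - 1)] (lam t))
    (hlam_nonneg : ∀ t ω, 0 ≤ lam t ω)
    (hlam_bdd : ∃ C : ℝ, ∀ t ω, lam t ω ≤ C)
    (δ : ℝ) (hδ : 0 < δ)
    (hconstr : ∀ t, 1 ≤ t → ∀ᵐ ω ∂μ, δ ≤ 1 + lam t ω * D t ω)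
    (Y : ℕ → Ω → ℝ)
    (hY : ∀ t ω, Y t ω = ∏ i ∈ Finset.Icc 1 t,
      (1 + lam i ω * D i ω) / (1 + lam i ω * (μ[D i | ℱ (i - 1)]) ω)) :
    Martingale Y ℱ μ ∧ ∀ t : ℕ, ∫ ω, Y t ω ∂μ = 1 := by
  obtain ⟨CD, hCD⟩ := hD_bdd
  obtain ⟨CL, hCL⟩ := hlam_bdd
  have hlamD : ∀ t ω, |lam t ω * D t ω| ≤ CL * CD := fun t ω ↦ by
    rw [abs_mul, abs_of_nonneg (hlam_nonneg t ω)]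
    exact mul_le_mul (hCL t ω) (hCD t ω) (abs_nonneg _) ((hlam_nonneg t ω).trans (hCL t ω))
  have hD_meas' (n : ℕ) : Measurable[ℱ (n + 1)] (D (n + 1)) := hD_meas _ n.succ_pos
  have hlam_meas' (n : ℕ) : Measurable[ℱ n] (lam (n + 1)) := hlam_meas _ n.succ_pos
  have hD_meas₀ (n : ℕ) : Measurable (D (n + 1)) := (hD_meas' n).mono (ℱ.le _) le_rfl
  have hY₀ : Y 0 = 1 := funext fun ω ↦ by simp [hY]
  have hD_int (n : ℕ) : Integrable (D (n + 1)) μ :=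
    .of_bound (hD_meas₀ n).aestronglyMeasurable CD (ae_of_all _ (hCD _))
  have hmart : Martingale Y ℱ μ := by
    refine martingale_of_succ_eq_mul
      (R := fun n ↦ likelihoodRatio μ (ℱ n) (lam (n + 1)) (D (n + 1)))
      (hY₀ ▸ stronglyMeasurable_const) (hY₀ ▸ integrable_const 1)
      (fun n ↦ (measurable_likelihoodRatio (ℱ.mono n.le_succ)
        ((hlam_meas' n).mono (ℱ.mono n.le_succ) le_rfl) (hD_meas' n)).stronglyMeasurable)
      (fun n ↦ ⟨_, ae_abs_likelihoodRatio_le (ℱ.le n) (hlam_meas' n) (hD_meas₀ n) (hD_int n)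
        (hlamD (n + 1)) hδ (hconstr _ n.succ_pos)⟩)
      (fun n ↦ condExp_likelihoodRatio (ℱ.le n) (hlam_meas' n) (hD_meas₀ n) (hD_int n)
        (hlamD (n + 1)) hδ (hconstr _ n.succ_pos))
      fun n ↦ funext fun ω ↦ ?_
    simp only [Pi.mul_apply, hY]
    rw [Finset.prod_Icc_succ_top n.succ_pos]
    rfl
  exact ⟨hmart, fun t ↦ by rw [hmart.integral_eq, hY₀]; simp⟩
end

section
/- Let T ≥ 1, let D_1, …, D_T be real numbers with D_t² ≤ M² for all t, where M > 0, and let β > 0. Then Σ_{t=1}^T D_t²/( Σ_{i=1}^{t-1} D_i² + β ) ≤ ( (M²/β)/log(1 + M²/β) )·log( (Σ_{t=1}^T D_t²)/β + 1 ), where the empty sum Σ_{i=1}^{0} D_i² is 0. -/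
/-!
Write `γ = M²/β`, `a_t = D_t²` and `S_t = β + a_1 + ⋯ + a_t`. Since `a_t ≤ γβ ≤ γ S_{t-1}`, the ratio
`u = a_t / S_{t-1}` lies in `[0, γ]`, and by concavity of `log` the chord slope `log (1 + u) / u`
is at least `log (1 + γ) / γ`. Hence each summand is at most `γ / log (1 + γ)` times
`log (1 + u) = log S_t - log S_{t-1}`, and the bound follows by telescoping.
-/

open Finset Real

lemma mul_log_one_add_le_mul_log_one_add {u γ : ℝ} (hu : 0 ≤ u) (huγ : u ≤ γ) :
    u * log (1 + γ) ≤ γ * log (1 + u) := by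
  rcases hu.eq_or_lt with rfl | hu
  · simp
  have hslope := strictConcaveOn_log_Ioi.concaveOn.antitoneOn_slope_gt (x := 1) (by simp)
    ⟨by simp; linarith, by linarith⟩ ⟨by simp; linarith, by linarith⟩
    (by linarith : 1 + u ≤ 1 + γ)
  simp only [slope_def_field, log_one, sub_zero, add_sub_cancel_left] at hslope
  rw [div_le_div_iff₀ (by linarith) hu] at hslope
  linarith

lemma div_le_mul_log_sub_log {a x β γ : ℝ} (hβ : 0 < β) (hβx : β ≤ x) (hγ : 0 < γ)
    (ha : 0 ≤ a) (haγ : a ≤ γ * β) :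
    a / x ≤ γ / log (1 + γ) * (log (x + a) - log x) := by
  have hx : 0 < x := hβ.trans_le hβx
  have hlog : log (x + a) - log x = log (1 + a / x) := by
    rw [← log_div (by positivity) hx.ne']
    congr 1
    field_simp
  have hu : a / x ≤ γ := by
    rw [div_le_iff₀ hx]
    nlinarith
  rw [hlog, div_mul_eq_mul_div, le_div_iff₀ (log_pos (by linarith))]
  exact mul_log_one_add_le_mul_log_one_add (div_nonneg ha hx.le) hu

theorem sum_div_partial_sum_add_le {a : ℕ → ℝ} {β γ : ℝ} (hβ : 0 < β) (hγ : 0 < γ) (n : ℕ)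
    (ha : ∀ t ∈ Icc 1 n, 0 ≤ a t) (haγ : ∀ t ∈ Icc 1 n, a t ≤ γ * β) :
    ∑ t ∈ Icc 1 n, a t / (∑ i ∈ Icc 1 (t - 1), a i + β) ≤
      γ / log (1 + γ) * log ((∑ t ∈ Icc 1 n, a t) / β + 1) := by
  suffices ∑ t ∈ Icc 1 n, a t / (∑ i ∈ Icc 1 (t - 1), a i + β) ≤
      γ / log (1 + γ) * (log (∑ t ∈ Icc 1 n, a t + β) - log β) by
    have hsum : 0 ≤ ∑ t ∈ Icc 1 n, a t := sum_nonneg ha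
    rwa [div_add_one hβ.ne', log_div (by positivity) hβ.ne']
  induction n with
  | zero => simp
  | succ n ih =>
    have ha' : ∀ t ∈ Icc 1 n, 0 ≤ a t := fun t ht ↦ ha t (Icc_subset_Icc_right n.le_succ ht)
    have hstep := div_le_mul_log_sub_log (a := a (n + 1)) hβ
      (le_add_of_nonneg_left (sum_nonneg ha')) hγ (ha _ (by simp)) (haγ _ (by simp))
    have ih := ih ha' fun t ht ↦ haγ t (Icc_subset_Icc_right n.le_succ ht)
    rw [sum_Icc_succ_top (by omega), sum_Icc_succ_top (by omega), Nat.add_sub_cancel]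
    calc _ ≤ γ / log (1 + γ) * (log (∑ t ∈ Icc 1 n, a t + β) - log β)
          + γ / log (1 + γ) * (log (∑ t ∈ Icc 1 n, a t + β + a (n + 1))
            - log (∑ t ∈ Icc 1 n, a t + β)) := add_le_add ih hstep
      _ = _ := by ring_nf

theorem stmt_13_general (T : ℕ) (D : ℕ → ℝ) (M β : ℝ) (hM : 0 < M) (hβ : 0 < β)
    (hD : ∀ t, 1 ≤ t → t ≤ T → (D t) ^ 2 ≤ M ^ 2) :
    ∑ t ∈ Finset.Icc 1 T, (D t) ^ 2 / ((∑ i ∈ Finset.Icc 1 (t - 1), (D i) ^ 2) + β) ≤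
      ((M ^ 2 / β) / Real.log (1 + M ^ 2 / β)) *
        Real.log ((∑ t ∈ Finset.Icc 1 T, (D t) ^ 2) / β + 1) := by
  refine sum_div_partial_sum_add_le hβ (by positivity) T (fun t _ ↦ sq_nonneg (D t)) ?_
  intro t ht
  rw [div_mul_cancel₀ _ hβ.ne']
  exact hD t (mem_Icc.1 ht).1 (mem_Icc.1 ht).2

/-- Self-normalized sum bound: if `D_t² ≤ M²` for all `t`, then
`Σ_{t=1}^T D_t² / (Σ_{i<t} D_i² + β) ≤ ((M²/β)/log(1+M²/β)) · log(Σ D_t²/β + 1)`. -/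
theorem stmt_13 (T : ℕ) (hT : 1 ≤ T) (D : ℕ → ℝ) (M β : ℝ) (hM : 0 < M) (hβ : 0 < β)
    (hD : ∀ t, 1 ≤ t → t ≤ T → (D t) ^ 2 ≤ M ^ 2) :
    ∑ t ∈ Finset.Icc 1 T, (D t) ^ 2 / ((∑ i ∈ Finset.Icc 1 (t - 1), (D i) ^ 2) + β) ≤
      ((M ^ 2 / β) / Real.log (1 + M ^ 2 / β)) *
        Real.log ((∑ t ∈ Finset.Icc 1 T, (D t) ^ 2) / β + 1) :=
  stmt_13_general T D M β hM hβ hD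
end
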